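/- arXiv:2004.01436 — 2 statements merged into one kernel-verified Lean document; each statement's English description precedes it below -/
import Mathlib

section
/- Let G, H be finite groups of coprime orders, let α ∈ ℤG be nilpotent and let h ∈ H. Then α(h - 1), viewed in ℤ[G × H], is nilpotent and lies in Δ^ω(G × H) = ⋂_{n≥1} Δⁿ(G × H); consequently 1 + α(h-1) is a unit of ℤ[G × H] lying in 1 + Δ^ω(G × H). -/
open MonoidAlgebra

/-- The augmentation map `ℤG → ℤ`. -/
noncomputable def aug (G : Type*) [Group G] : MonoidAlgebra ℤ G →ₐ[ℤ] ℤ :=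
  (MonoidAlgebra.lift ℤ ℤ G) 1

/-- The augmentation ideal `Δ(G)` of `ℤG`. -/
noncomputable def Δ (G : Type*) [Group G] : Ideal (MonoidAlgebra ℤ G) :=
  RingHom.ker (aug G).toRingHom

lemma aug_of (G : Type*) [Group G] (g : G) : aug G (MonoidAlgebra.of ℤ G g) = 1 := by
  simp [aug]

lemma aug_single (G : Type*) [Group G] (g : G) :
    aug G (MonoidAlgebra.single g (1 : ℤ)) = 1 := by
  simp [aug]

lemma of_sub_one_mem (G : Type*) [Group G] (g : G) :
    MonoidAlgebra.of ℤ G g - 1 ∈ Δ G := by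
  simp [Δ, RingHom.mem_ker, aug_single]

/-- The group `V(ℤG)` of normalized units. -/
noncomputable def V (G : Type*) [Group G] : Subgroup (MonoidAlgebra ℤ G)ˣ :=
  MonoidHom.ker (Units.map (aug G).toRingHom.toMonoidHom)

/-- The subgroup `V_n(ℤG) = V(ℤG) ∩ (1 + Δⁿ(G))`. -/
noncomputable def Vn (G : Type*) [Group G] (n : ℕ) : Subgroup (MonoidAlgebra ℤ G)ˣ where
  carrier := {u | u ∈ V G ∧ (u : MonoidAlgebra ℤ G) - 1 ∈ Δ G ^ n}
  one_mem' := ⟨(V G).one_mem, by simp⟩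
  mul_mem' := by
    rintro u v ⟨hu, hu'⟩ ⟨hv, hv'⟩
    refine ⟨(V G).mul_mem hu hv, ?_⟩
    have h : ((u * v : (MonoidAlgebra ℤ G)ˣ) : MonoidAlgebra ℤ G) - 1 =
        ((u : MonoidAlgebra ℤ G) - 1) * ((v : MonoidAlgebra ℤ G) - 1) +
        ((u : MonoidAlgebra ℤ G) - 1) + ((v : MonoidAlgebra ℤ G) - 1) := by
      rw [Units.val_mul]; noncomm_ring
    rw [h]
    exact add_mem (add_mem (Ideal.mul_mem_left _ _ hv') hu') hv'
  inv_mem' := by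
    rintro u ⟨hu, hu'⟩
    refine ⟨(V G).inv_mem hu, ?_⟩
    have h1 : ((u⁻¹ : (MonoidAlgebra ℤ G)ˣ) : MonoidAlgebra ℤ G) * (u : MonoidAlgebra ℤ G) = 1 :=
      u.inv_mul
    have h : ((u⁻¹ : (MonoidAlgebra ℤ G)ˣ) : MonoidAlgebra ℤ G) - 1 =
        -(((u⁻¹ : (MonoidAlgebra ℤ G)ˣ) : MonoidAlgebra ℤ G) * ((u : MonoidAlgebra ℤ G) - 1)) := by
      rw [mul_sub, h1, mul_one]; noncomm_ring
    rw [h]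
    exact neg_mem (Ideal.mul_mem_left _ _ hu')

/-- The `Δ`-adic residue `V_ω(ℤG) = ⋂_{n ≥ 1} V_n(ℤG)`. -/
noncomputable def Vω (G : Type*) [Group G] : Subgroup (MonoidAlgebra ℤ G)ˣ :=
  ⨅ n : ℕ, Vn G (n + 1)


section AuxStmt10

lemma pow_sub_one_mem_sq' {R : Type*} [Ring R] (I : Ideal R) (u : R) (hu : u - 1 ∈ I) :
    ∀ k : ℕ, u ^ k - 1 - (k : R) * (u - 1) ∈ I * I := by
  intro k
  induction k with
  | zero => simp
  | succ k ih =>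
      have h1 : u ^ k - 1 ∈ I := by
        have : u ^ k - 1 = (u ^ k - 1 - (k : R) * (u - 1)) + (k : R) * (u - 1) := by noncomm_ring
        rw [this]
        exact add_mem (Ideal.mul_le_right ih) (Ideal.mul_mem_left _ _ hu)
      have heq : u ^ (k + 1) - 1 - ((k + 1 : ℕ) : R) * (u - 1)
          = (u ^ k - 1) * (u - 1) + (u ^ k - 1 - (k : R) * (u - 1)) := by
        push_cast; noncomm_ring [pow_succ]
      rw [heq]
      exact add_mem (Ideal.mul_mem_mul h1 hu) ih

lemma card_mul_mem_sq' {R : Type*} [Ring R] (I : Ideal R) (u : R) (hu : u - 1 ∈ I)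
    (k : ℕ) (hk : u ^ k = 1) : (k : R) * (u - 1) ∈ I * I := by
  have := pow_sub_one_mem_sq' I u hu k
  rw [hk, sub_self, zero_sub] at this
  simpa using neg_mem this

lemma natCast_mul_mem_sq_of_span' {R : Type*} [Ring R] (S : Set R) (k : ℕ)
    (hS : ∀ x ∈ S, (k : R) * x ∈ Ideal.span S * Ideal.span S) :
    ∀ j ∈ Ideal.span S, (k : R) * j ∈ Ideal.span S * Ideal.span S := by
  intro j hj
  induction hj using Submodule.span_induction with
  | mem x hx => exact hS x hx
  | zero => simp
  | add x y _ _ hx hy => rw [mul_add]; exact add_mem hx hy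
  | smul r x _ hx =>
      have : (k : R) * (r • x) = r • ((k : R) * x) := by
        rw [smul_eq_mul, smul_eq_mul, ← mul_assoc, (Nat.cast_commute k r).eq, mul_assoc]
      rw [this]
      exact Ideal.mul_mem_left _ _ hx

lemma aux_mul_pow_le' {R : Type*} [Ring R] (M : Ideal R) :
    ∀ k : ℕ, M * M ^ (k + 1) ≤ M ^ (k + 2) := by
  intro k
  induction k with
  | zero =>
      rw [Submodule.pow_one, show (0:ℕ)+2 = 1+1 from rfl, Submodule.pow_succ, Submodule.pow_one]
  | succ k ih =>
      calc M * M ^ (k + 2) = (M * M ^ (k + 1)) * M := by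
            rw [Submodule.pow_succ, mul_assoc]
        _ ≤ M ^ (k + 2) * M := mul_le_mul' ih le_rfl
        _ = M ^ (k + 3) := (Submodule.pow_succ M).symm

lemma aug_eq_zero_of_nilpotent' {G : Type*} [Group G] (α : MonoidAlgebra ℤ G)
    (hα : IsNilpotent α) : aug G α = 0 :=
  (IsNilpotent.map hα (aug G).toRingHom).eq_zero

lemma aug_single'' (G : Type*) [Group G] (g : G) (c : ℤ) :
    aug G (MonoidAlgebra.single g c) = c := by
  simp [aug]

lemma mem_span_of_aug_zero' {G H : Type*} [Group G] [Group H] (α : MonoidAlgebra ℤ G)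
    (h0 : aug G α = 0) :
    (MonoidAlgebra.mapDomainRingHom ℤ (MonoidHom.inl G H)) α ∈
      Ideal.span {x : MonoidAlgebra ℤ (G × H) |
        ∃ g : G, x = MonoidAlgebra.of ℤ (G × H) (g, 1) - 1} := by
  have key : ∀ β : MonoidAlgebra ℤ G,
      (MonoidAlgebra.mapDomainRingHom ℤ (MonoidHom.inl G H)) β - (aug G β) • 1 ∈
      Ideal.span {x : MonoidAlgebra ℤ (G × H) |
        ∃ g : G, x = MonoidAlgebra.of ℤ (G × H) (g, 1) - 1} := by
    intro β
    induction β using MonoidAlgebra.induction_linear with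
    | zero => simp
    | add f g hf hg =>
        have := add_mem hf hg
        rw [map_add, map_add, add_smul] at *
        convert this using 1; abel
    | single g c =>
        have h1 : (MonoidAlgebra.mapDomainRingHom ℤ (MonoidHom.inl G H)) (MonoidAlgebra.single g c)
            = MonoidAlgebra.single ((g : G), (1 : H)) c := by
          simp [MonoidAlgebra.mapDomainRingHom, Finsupp.mapDomain_single]
        rw [h1, aug_single'']
        have h2 : (MonoidAlgebra.single ((g : G), (1 : H)) c : MonoidAlgebra ℤ (G × H)) - c • 1
            = c • (MonoidAlgebra.of ℤ (G × H) (g, 1) - 1) := by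
          simp [MonoidAlgebra.of_apply, MonoidAlgebra.smul_single', smul_sub]
        have hg : MonoidAlgebra.of ℤ (G × H) (g, 1) - 1 ∈
            Ideal.span {x : MonoidAlgebra ℤ (G × H) |
              ∃ g : G, x = MonoidAlgebra.of ℤ (G × H) (g, 1) - 1} :=
          Ideal.subset_span ⟨g, rfl⟩
        rw [h2, zsmul_eq_mul]
        exact Ideal.mul_mem_left _ _ hg
  have := key α
  rwa [h0, zero_smul, sub_zero] at this

end AuxStmt10


theorem stmt10 (G H : Type*) [Group G] [Group H] [Fintype G] [Fintype H]
    (hco : Nat.Coprime (Fintype.card G) (Fintype.card H))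
    (α : MonoidAlgebra ℤ G) (hα : IsNilpotent α) (h : H) :
    IsNilpotent ((MonoidAlgebra.mapDomainRingHom ℤ (MonoidHom.inl G H)) α *
      (MonoidAlgebra.of ℤ (G × H) (1, h) - 1)) ∧
    (∀ n : ℕ, ((MonoidAlgebra.mapDomainRingHom ℤ (MonoidHom.inl G H)) α *
      (MonoidAlgebra.of ℤ (G × H) (1, h) - 1)) ∈ Δ (G × H) ^ n) ∧
    IsUnit (1 + ((MonoidAlgebra.mapDomainRingHom ℤ (MonoidHom.inl G H)) α *
      (MonoidAlgebra.of ℤ (G × H) (1, h) - 1))) := by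
  classical
  have hcomm : ∀ β : MonoidAlgebra ℤ G,
      Commute ((MonoidAlgebra.mapDomainRingHom ℤ (MonoidHom.inl G H)) β)
        (MonoidAlgebra.of ℤ (G × H) (1, h)) := by
    intro β
    induction β using MonoidAlgebra.induction_linear with
    | zero => rw [map_zero]; exact Commute.zero_left _
    | add f g hf hg => rw [map_add]; exact hf.add_left hg
    | single g c =>
        have h1 : (MonoidAlgebra.mapDomainRingHom ℤ (MonoidHom.inl G H)) (MonoidAlgebra.single g c)
            = MonoidAlgebra.single ((g : G), (1 : H)) c := by
          simp [MonoidAlgebra.mapDomainRingHom, Finsupp.mapDomain_single]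
        rw [h1]
        show _ * _ = _ * _
        rw [MonoidAlgebra.of_apply, MonoidAlgebra.single_mul_single,
          MonoidAlgebra.single_mul_single]
        congr 1
        · simp [Prod.ext_iff]
        · simp
  have hcd : Commute ((MonoidAlgebra.mapDomainRingHom ℤ (MonoidHom.inl G H)) α)
      (MonoidAlgebra.of ℤ (G × H) (1, h) - 1) :=
    (hcomm α).sub_right (Commute.one_right _)
  have hφnil : IsNilpotent ((MonoidAlgebra.mapDomainRingHom ℤ (MonoidHom.inl G H)) α) :=
    IsNilpotent.map hα _
  have hnil : IsNilpotent ((MonoidAlgebra.mapDomainRingHom ℤ (MonoidHom.inl G H)) α *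
      (MonoidAlgebra.of ℤ (G × H) (1, h) - 1)) :=
    hcd.isNilpotent_mul_right hφnil
  set SG : Set (MonoidAlgebra ℤ (G × H)) :=
    {x | ∃ g : G, x = MonoidAlgebra.of ℤ (G × H) (g, 1) - 1} with hSG
  set SH : Set (MonoidAlgebra ℤ (G × H)) :=
    {x | ∃ h' : H, x = MonoidAlgebra.of ℤ (G × H) (1, h') - 1} with hSH
  set J : Ideal (MonoidAlgebra ℤ (G × H)) := Ideal.span SG with hJ
  set K : Ideal (MonoidAlgebra ℤ (G × H)) := Ideal.span SH with hK
  have hJΔ : J ≤ Δ (G × H) := Ideal.span_le.mpr (by rintro x ⟨g, rfl⟩; exact of_sub_one_mem _ _)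
  have hKΔ : K ≤ Δ (G × H) := Ideal.span_le.mpr (by rintro x ⟨h', rfl⟩; exact of_sub_one_mem _ _)
  have hαJ : (MonoidAlgebra.mapDomainRingHom ℤ (MonoidHom.inl G H)) α ∈ J :=
    mem_span_of_aug_zero' α (aug_eq_zero_of_nilpotent' α hα)
  have hdSH : MonoidAlgebra.of ℤ (G × H) (1, h) - 1 ∈ SH := ⟨h, rfl⟩
  have hdK : MonoidAlgebra.of ℤ (G × H) (1, h) - 1 ∈ K := Ideal.subset_span hdSH
  have hG2 : ∀ x ∈ SG, ((Fintype.card G : ℕ) : MonoidAlgebra ℤ (G × H)) * x ∈ J * J := by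
    rintro x ⟨g, rfl⟩
    refine card_mul_mem_sq' J _ (Ideal.subset_span ⟨g, rfl⟩) _ ?_
    rw [← map_pow]
    have hone : ((g, (1 : H)) : G × H) ^ Fintype.card G = 1 := by
      rw [Prod.pow_mk, pow_card_eq_one, one_pow]
      rfl
    rw [hone, map_one]
  have hH2 : ∀ x ∈ SH, ((Fintype.card H : ℕ) : MonoidAlgebra ℤ (G × H)) * x ∈ K * K := by
    rintro x ⟨h', rfl⟩
    refine card_mul_mem_sq' K _ (Ideal.subset_span ⟨h', rfl⟩) _ ?_
    rw [← map_pow]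
    have hone : (((1 : G), h') : G × H) ^ Fintype.card H = 1 := by
      rw [Prod.pow_mk, pow_card_eq_one, one_pow]
      rfl
    rw [hone, map_one]
  have hJJ : ∀ j ∈ J, ((Fintype.card G : ℕ) : MonoidAlgebra ℤ (G × H)) * j ∈ J * J :=
    natCast_mul_mem_sq_of_span' SG (Fintype.card G) hG2
  have hKK : ∀ k ∈ K, ((Fintype.card H : ℕ) : MonoidAlgebra ℤ (G × H)) * k ∈ K * K :=
    natCast_mul_mem_sq_of_span' SH (Fintype.card H) hH2
  have key : ∀ n : ℕ, J * K ≤ Δ (G × H) ^ (n + 1) := by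
    intro n
    induction n with
    | zero =>
        rw [Submodule.pow_one]
        exact Submodule.mul_le.mpr fun j hj k hk => Ideal.mul_mem_left _ _ (hKΔ hk)
    | succ n ih =>
        intro x hx
        obtain ⟨a, b, hab⟩ := Nat.isCoprime_iff_coprime.mpr hco
        have h1 : ((Fintype.card G : ℕ) : MonoidAlgebra ℤ (G × H)) * x ∈
            Δ (G × H) ^ (n + 2) := by
          have hmem : ((Fintype.card G : ℕ) : MonoidAlgebra ℤ (G × H)) * x ∈ J * (J * K) := by
            refine Submodule.mul_induction_on hx (fun j hj k hk => ?_) (fun y z hy hz => ?_)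
            · rw [← mul_assoc ((Fintype.card G : ℕ) : MonoidAlgebra ℤ (G × H)) j k]
              have hmm : (((Fintype.card G : ℕ) : MonoidAlgebra ℤ (G × H)) * j) * k ∈
                  (J * J) * K := Submodule.mul_mem_mul (hJJ j hj) hk
              rw [mul_assoc J J K] at hmm
              exact hmm
            · rw [mul_add]; exact add_mem hy hz
          have hle : J * (J * K) ≤ Δ (G × H) * Δ (G × H) ^ (n + 1) :=
            mul_le_mul' hJΔ ih
          exact aux_mul_pow_le' _ n (hle hmem)
        have h2 : ((Fintype.card H : ℕ) : MonoidAlgebra ℤ (G × H)) * x ∈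
            Δ (G × H) ^ (n + 2) := by
          have hmem : ((Fintype.card H : ℕ) : MonoidAlgebra ℤ (G × H)) * x ∈ (J * K) * K := by
            refine Submodule.mul_induction_on hx (fun j hj k hk => ?_) (fun y z hy hz => ?_)
            · have hc : ((Fintype.card H : ℕ) : MonoidAlgebra ℤ (G × H)) * (j * k)
                  = j * (((Fintype.card H : ℕ) : MonoidAlgebra ℤ (G × H)) * k) := by
                rw [← mul_assoc, (Nat.cast_commute (Fintype.card H) j).eq, mul_assoc]
              rw [hc]
              have hmm : j * (((Fintype.card H : ℕ) : MonoidAlgebra ℤ (G × H)) * k) ∈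
                  J * (K * K) := Submodule.mul_mem_mul hj (hKK k hk)
              rw [← mul_assoc J K K] at hmm
              exact hmm
            · rw [mul_add]; exact add_mem hy hz
          have hle : (J * K) * K ≤ Δ (G × H) ^ (n + 1) * Δ (G × H) :=
            mul_le_mul' ih hKΔ
          exact (Submodule.pow_succ (Δ (G × H)) (n := n + 1)) ▸ hle hmem
        have hone : ((a * (Fintype.card G : ℤ) + b * (Fintype.card H : ℤ) : ℤ) :
            MonoidAlgebra ℤ (G × H)) = 1 := by
          rw [hab]; exact Int.cast_one
        have hxeq : x = (a : MonoidAlgebra ℤ (G × H)) *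
              (((Fintype.card G : ℕ) : MonoidAlgebra ℤ (G × H)) * x)
            + (b : MonoidAlgebra ℤ (G × H)) *
              (((Fintype.card H : ℕ) : MonoidAlgebra ℤ (G × H)) * x) := by
          calc x = ((a * (Fintype.card G : ℤ) + b * (Fintype.card H : ℤ) : ℤ) :
              MonoidAlgebra ℤ (G × H)) * x := by rw [hone, one_mul]
            _ = _ := by push_cast; rw [add_mul, mul_assoc, mul_assoc]
        rw [hxeq]
        exact add_mem (Ideal.mul_mem_left _ _ h1) (Ideal.mul_mem_left _ _ h2)
  have hβ : (MonoidAlgebra.mapDomainRingHom ℤ (MonoidHom.inl G H)) α *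
      (MonoidAlgebra.of ℤ (G × H) (1, h) - 1) ∈ J * K :=
    Submodule.mul_mem_mul hαJ hdK
  refine ⟨hnil, ?_, hnil.isUnit_one_add⟩
  intro n
  match n with
  | 0 =>
      rw [Submodule.pow_zero, Submodule.one_eq_span]
      set y := (MonoidAlgebra.mapDomainRingHom ℤ (MonoidHom.inl G H)) α *
        (MonoidAlgebra.of ℤ (G × H) (1, h) - 1) with hy
      have : y = y • (1 : MonoidAlgebra ℤ (G × H)) := by rw [smul_eq_mul, mul_one]
      rw [this]
      exact Submodule.smul_mem _ _ (Submodule.subset_span rfl)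
  | n + 1 => exact key n hβ
end

section
/- If g₁ ∈ G lies in γ_l(G)·G^{p^k} for all primes p and all l, k ≥ 1, then for every n ≥ 1, every prime p, and every ℓ ≥ 1, one has g₁ - 1 ∈ Δⁿ(G) + p^ℓ·Δ(G) in ℤG. -/
open MonoidAlgebra

open Pointwise


section Aux

open scoped commutatorElement

variable (G : Type*) [Group G]

lemma delta_mem_iff (x : MonoidAlgebra ℤ G) : x ∈ Δ G ↔ aug G x = 0 := by
  simp [Δ, RingHom.mem_ker]

lemma delta_mul_mem {x : MonoidAlgebra ℤ G} (hx : x ∈ Δ G) (y : MonoidAlgebra ℤ G) :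
    x * y ∈ Δ G := by
  rw [delta_mem_iff] at *
  rw [map_mul, hx, zero_mul]

lemma delta_pow_mul_mem : ∀ k : ℕ, ∀ a ∈ Δ G ^ (k + 1), ∀ b, a * b ∈ Δ G ^ (k + 1)
  | 0 => by
    intro a ha b
    rw [zero_add, Submodule.pow_one] at *
    exact delta_mul_mem G ha b
  | k + 1 => by
    intro a ha b
    revert b
    refine Submodule.mul_induction_on (show a ∈ Δ G ^ (k + 1) * Δ G from ha) ?_ ?_
    · intro m hm d hd b
      rw [mul_assoc]
      exact Submodule.mul_mem_mul hm (delta_mul_mem G hd b)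
    · intro x y hx hy b
      rw [add_mul]
      exact add_mem (hx b) (hy b)

lemma delta_pow_le : ∀ k : ℕ, Δ G ^ (k + 1) ≤ Δ G
  | 0 => by rw [zero_add, Submodule.pow_one]
  | k + 1 => by
    intro x hx
    refine Submodule.mul_induction_on (show x ∈ Δ G ^ (k + 1) * Δ G from hx) ?_ ?_
    · intro m _ d hd
      exact Ideal.mul_mem_left _ _ hd
    · intro x y hx hy
      exact add_mem hx hy

lemma delta_pow_succ_le (k : ℕ) : Δ G ^ (k + 2) ≤ Δ G ^ (k + 1) := by
  intro x hx
  refine Submodule.mul_induction_on (show x ∈ Δ G ^ (k + 1) * Δ G from hx) ?_ ?_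
  · intro m hm d _
    exact delta_pow_mul_mem G k m hm d
  · intro x y hx hy
    exact add_mem hx hy

lemma delta_mul_pow_le : ∀ k : ℕ, Δ G * Δ G ^ (k + 1) ≤ Δ G ^ (k + 2)
  | 0 => by
    refine Submodule.mul_le.mpr fun d hd e he => ?_
    rw [zero_add, Submodule.pow_one] at he
    exact Submodule.mul_mem_mul (show d ∈ Δ G ^ (0 + 1) by rwa [zero_add, Submodule.pow_one]) he
  | k + 1 => by
    refine Submodule.mul_le.mpr fun d hd x hx => ?_
    refine Submodule.mul_induction_on (show x ∈ Δ G ^ (k + 1) * Δ G from hx) ?_ ?_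
    · intro m hm e he
      rw [← mul_assoc]
      have hdm : d * m ∈ Δ G ^ (k + 2) :=
        delta_mul_pow_le k (Submodule.mul_mem_mul hd hm)
      exact Submodule.mul_mem_mul hdm he
    · intro x y hx hy
      rw [mul_add]
      exact add_mem hx hy

/-- The subgroup of `G` of elements `g` with `g - 1 ∈ I`. -/
noncomputable def augD (I : Ideal (MonoidAlgebra ℤ G)) : Subgroup G where
  carrier := {g | MonoidAlgebra.of ℤ G g - 1 ∈ I}
  one_mem' := by
    simp only [Set.mem_setOf_eq, map_one, sub_self]
    exact zero_mem I
  mul_mem' := by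
    intro a b ha hb
    simp only [Set.mem_setOf_eq] at *
    have h : MonoidAlgebra.of ℤ G (a * b) - 1 =
        (MonoidAlgebra.of ℤ G a - 1) +
          MonoidAlgebra.of ℤ G a * (MonoidAlgebra.of ℤ G b - 1) := by
      rw [map_mul]; noncomm_ring
    rw [h]
    exact add_mem ha (Ideal.mul_mem_left _ _ hb)
  inv_mem' := by
    intro a ha
    simp only [Set.mem_setOf_eq] at *
    have h1 : MonoidAlgebra.of ℤ G a⁻¹ * MonoidAlgebra.of ℤ G a = 1 := by
      rw [← map_mul, inv_mul_cancel, map_one]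
    have h : MonoidAlgebra.of ℤ G a⁻¹ - 1 =
        -(MonoidAlgebra.of ℤ G a⁻¹ * (MonoidAlgebra.of ℤ G a - 1)) := by
      rw [mul_sub, h1, mul_one]; noncomm_ring
    rw [h]
    exact neg_mem (Ideal.mul_mem_left _ _ ha)

lemma mem_augD {I : Ideal (MonoidAlgebra ℤ G)} {g : G} :
    g ∈ augD G I ↔ MonoidAlgebra.of ℤ G g - 1 ∈ I := Iff.rfl

lemma lcs_le : ∀ n : ℕ, (⊤ : Subgroup G).lowerCentralSeries n ≤ augD G (Δ G ^ (n + 1)) := by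
  intro n
  induction n with
  | zero =>
    intro g _
    rw [mem_augD, zero_add, Submodule.pow_one]
    exact of_sub_one_mem G g
  | succ n ih =>
    rw [Subgroup.lowerCentralSeries_succ]
    refine Subgroup.commutator_le.mpr fun a ha b _ => ?_
    have hA : MonoidAlgebra.of ℤ G a - 1 ∈ Δ G ^ (n + 1) := ih ha
    have hB : MonoidAlgebra.of ℤ G b - 1 ∈ Δ G := of_sub_one_mem G b
    rw [mem_augD]
    have hab : a * b * (b * a)⁻¹ = ⁅a, b⁆ := by
      rw [commutatorElement_def]; group
    have e1 : MonoidAlgebra.of ℤ G ⁅a, b⁆ - 1 =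
        (MonoidAlgebra.of ℤ G (a * b) - MonoidAlgebra.of ℤ G (b * a)) *
          MonoidAlgebra.of ℤ G ((b * a)⁻¹) := by
      rw [sub_mul, ← map_mul, ← map_mul, hab, mul_inv_cancel, map_one]
    have e2 : MonoidAlgebra.of ℤ G (a * b) - MonoidAlgebra.of ℤ G (b * a) =
        (MonoidAlgebra.of ℤ G a - 1) * (MonoidAlgebra.of ℤ G b - 1) -
          (MonoidAlgebra.of ℤ G b - 1) * (MonoidAlgebra.of ℤ G a - 1) := by
      rw [map_mul, map_mul]; noncomm_ring
    have m1 : (MonoidAlgebra.of ℤ G a - 1) * (MonoidAlgebra.of ℤ G b - 1) ∈ Δ G ^ (n + 2) :=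
      Submodule.mul_mem_mul hA hB
    have m2 : (MonoidAlgebra.of ℤ G b - 1) * (MonoidAlgebra.of ℤ G a - 1) ∈ Δ G ^ (n + 2) :=
      delta_mul_pow_le G n (Submodule.mul_mem_mul hB hA)
    rw [e1]
    exact delta_pow_mul_mem G (n + 1) _ (by rw [e2]; exact sub_mem m1 m2) _

lemma pl_dvd_choose (p : ℕ) (hp : p.Prime) {i n l : ℕ} (h1 : 1 ≤ i) (h2 : i < n) :
    p ^ l ∣ (p ^ (l + n)).choose i := by
  set k := l + n with hk
  set j := i.factorization p with hj
  have hi0 : i ≠ 0 := by omega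
  have hpj : p ^ j ∣ i := Nat.ordProj_dvd i p
  have hnd : ¬ p ∣ i / p ^ j := Nat.not_dvd_ordCompl hp hi0
  have heq : p ^ j * (i / p ^ j) = i := Nat.ordProj_mul_ordCompl_eq_self i p
  have hjlt : j < n := by
    have hle : p ^ j ≤ i := Nat.le_of_dvd (by omega) hpj
    have hlt : j < p ^ j := Nat.lt_pow_self (n := j) hp.one_lt
    omega
  have hjk : j ≤ k := by omega
  have key : p ^ k ∣ (p ^ k).choose i * i := by
    have h := Nat.add_one_mul_choose_eq (p ^ k - 1) (i - 1)
    have hpk : (p ^ k - 1) + 1 = p ^ k := by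
      have : 0 < p ^ k := pow_pos hp.pos k
      omega
    have hii : (i - 1) + 1 = i := by omega
    rw [hpk, hii] at h
    exact ⟨(p ^ k - 1).choose (i - 1), h.symm⟩
  have key2 : p ^ (k - j) ∣ (p ^ k).choose i * (i / p ^ j) := by
    have h2' : p ^ (k - j) * p ^ j = p ^ k := by
      rw [← pow_add]; congr 1; omega
    have h4 : ∀ C : ℕ, C * i = (C * (i / p ^ j)) * p ^ j := fun C => by
      rw [mul_assoc, mul_comm (i / p ^ j), heq]
    rw [h4 ((p ^ k).choose i)] at key
    refine (Nat.mul_dvd_mul_iff_right (pow_pos hp.pos j)).mp ?_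
    rw [h2']
    exact key
  have hcop : Nat.Coprime (p ^ (k - j)) (i / p ^ j) :=
    Nat.Coprime.pow_left _ (hp.coprime_iff_not_dvd.mpr hnd)
  have hdvd : p ^ (k - j) ∣ (p ^ k).choose i := hcop.dvd_of_dvd_mul_right key2
  exact dvd_trans (pow_dvd_pow p (by omega)) hdvd

lemma pow_pow_sub_one_mem (p l n : ℕ) (hp : p.Prime) (hn : 1 ≤ n) (y : G) :
    MonoidAlgebra.of ℤ G (y ^ p ^ (l + n)) - 1 ∈
      Δ G ^ n ⊔ Ideal.span {((p : MonoidAlgebra ℤ G)) ^ l} := by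
  set m := p ^ (l + n) with hm
  set x := MonoidAlgebra.of ℤ G y - 1 with hx
  have hxd : x ∈ Δ G := of_sub_one_mem G y
  have hof : MonoidAlgebra.of ℤ G (y ^ m) = (x + 1) ^ m := by
    rw [map_pow, hx, sub_add_cancel]
  have hexp := (Commute.one_right x).add_pow m
  rw [hof, hexp, Finset.sum_range_succ']
  have h0 : x ^ 0 * 1 ^ (m - 0) * (m.choose 0 : MonoidAlgebra ℤ G) = 1 := by simp
  rw [h0, add_sub_cancel_right]
  refine Submodule.sum_mem _ fun i _ => ?_
  simp only [one_pow, mul_one]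
  by_cases hcase : n ≤ i + 1
  · apply Submodule.mem_sup_left
    have hsplit : (i + 1 - n) + n = i + 1 := by omega
    have h1 : x ^ (i + 1) * (m.choose (i + 1) : MonoidAlgebra ℤ G) =
        ((m.choose (i + 1) : MonoidAlgebra ℤ G) * x ^ (i + 1 - n)) * x ^ n := by
      rw [mul_assoc, ← pow_add, hsplit, ← (Nat.cast_commute (m.choose (i + 1)) (x ^ (i + 1))).eq]
    rw [h1]
    exact Ideal.mul_mem_left _ _ (Submodule.pow_mem_pow _ hxd n)
  · apply Submodule.mem_sup_right
    obtain ⟨c, hc⟩ := pl_dvd_choose p hp (Nat.one_le_iff_ne_zero.mpr (Nat.succ_ne_zero i))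
      (show i + 1 < n by omega) (l := l)
    have hrw : x ^ (i + 1) * ((m.choose (i + 1) : ℕ) : MonoidAlgebra ℤ G) =
        (x ^ (i + 1) * (c : MonoidAlgebra ℤ G)) * ((p : MonoidAlgebra ℤ G)) ^ l := by
      rw [hc, Nat.cast_mul, (Nat.cast_commute (p ^ l) ((c : ℕ) : MonoidAlgebra ℤ G)).eq,
        ← mul_assoc, Nat.cast_pow]
    refine Submodule.mem_span_singleton.mpr ⟨x ^ (i + 1) * (c : MonoidAlgebra ℤ G), ?_⟩
    rw [smul_eq_mul]
    exact hrw.symm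

end Aux

theorem stmt18 (G : Type*) [Group G] (g₁ : G)
    (hg₁ : ∀ (p l k : ℕ), p.Prime →
      g₁ ∈ ((⊤ : Subgroup G).lowerCentralSeries l : Set G) *
        ((Subgroup.closure (Set.range fun y : G => y ^ p ^ k) : Subgroup G) : Set G)) :
    ∀ n : ℕ, 1 ≤ n → ∀ p : ℕ, p.Prime → ∀ l : ℕ, 1 ≤ l →
      ∃ a ∈ Δ G ^ n, ∃ b ∈ Δ G,
        MonoidAlgebra.of ℤ G g₁ - 1 = a + ((p : ℤ) ^ l) • b := by
  intro n hn p hp l hl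
  set I : Ideal (MonoidAlgebra ℤ G) :=
    Δ G ^ n ⊔ Ideal.span {((p : MonoidAlgebra ℤ G)) ^ l} with hI
  obtain ⟨k, rfl⟩ : ∃ k, n = k + 1 := ⟨n - 1, by omega⟩
  -- Step 1: `of g₁ - 1 ∈ I`.
  obtain ⟨c, hc, h, hh, rfl⟩ := hg₁ p (k + 1) (l + (k + 1)) hp
  have hC : MonoidAlgebra.of ℤ G c - 1 ∈ Δ G ^ (k + 1) :=
    delta_pow_succ_le G k (lcs_le G (k + 1) hc)
  have hH : MonoidAlgebra.of ℤ G h - 1 ∈ I := by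
    have hsub : Set.range (fun y : G => y ^ p ^ (l + (k + 1))) ⊆ (augD G I : Set G) := by
      rintro _ ⟨y, rfl⟩
      exact pow_pow_sub_one_mem G p l (k + 1) hp (by omega) y
    exact ((Subgroup.closure_le _).mpr hsub) hh
  have hCI : MonoidAlgebra.of ℤ G c - 1 ∈ I := Submodule.mem_sup_left hC
  have hmem : MonoidAlgebra.of ℤ G (c * h) - 1 ∈ I := by
    have e : MonoidAlgebra.of ℤ G (c * h) - 1 =
        (MonoidAlgebra.of ℤ G c - 1) * (MonoidAlgebra.of ℤ G h - 1) +
          (MonoidAlgebra.of ℤ G c - 1) + (MonoidAlgebra.of ℤ G h - 1) := by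
      rw [map_mul]; noncomm_ring
    rw [e]
    exact add_mem (add_mem (Ideal.mul_mem_left _ _ hH) hCI) hH
  -- Step 2: extract the decomposition.
  obtain ⟨a, ha, s, hs, heq⟩ := Submodule.mem_sup.mp hmem
  obtain ⟨b, hb⟩ := Submodule.mem_span_singleton.mp hs
  rw [smul_eq_mul] at hb
  -- `b ∈ Δ G` since everything else has augmentation zero.
  have haug : aug G (MonoidAlgebra.of ℤ G (c * h) - 1) = 0 := by
    rw [map_sub, aug_of, map_one, sub_self]
  have haug_a : aug G a = 0 := (delta_mem_iff G a).mp (delta_pow_le G k ha)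
  have haug_p : aug G (((p : MonoidAlgebra ℤ G)) ^ l) = (p : ℤ) ^ l := by
    rw [map_pow, map_natCast]
  have haug_b : aug G b = 0 := by
    have h0 : aug G b * (p : ℤ) ^ l = 0 := by
      have := haug
      rw [← heq, ← hb, map_add, haug_a, zero_add, map_mul, haug_p] at this
      exact this
    have hpl : ((p : ℤ) ^ l : ℤ) ≠ 0 :=
      pow_ne_zero _ (by exact_mod_cast hp.ne_zero)
    exact (mul_eq_zero.mp h0).resolve_right hpl
  refine ⟨a, ha, b, (delta_mem_iff G b).mpr haug_b, ?_⟩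
  have hsm : ((p : ℤ) ^ l) • b = b * ((p : MonoidAlgebra ℤ G)) ^ l := by
    rw [zsmul_eq_mul]
    push_cast
    exact ((Nat.cast_commute p b).pow_left l).eq
  rw [hsm, hb]
  exact heq.symm
end
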